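/- Given two quantum states (density matrices) ρ and σ, the maximum probability of correctly identifying which state one received (each prepared with prior probability 1/2, one measurement allowed) equals 1/2 + (1/4)‖ρ - σ‖₁ (Helstrom bound). -/

import Mathlib

/-!
Write `A = ρ - σ = A⁺ - A⁻`. As `tr σ = 1`, the success probability of `M` is
`1/2 + (1/2) Re tr (M A)`. For `0 ≤ M ≤ 1`,
`tr (M A) = tr A⁺ - tr ((1 - M) A⁺) - tr (M A⁻) ≤ tr A⁺`, since the trace of a product of
positive semidefinite matrices is nonnegative; the spectral projection of `A` onto its
positive eigenspace attains equality. Finally `|A| + A = 2 A⁺` and `tr A = 0` give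
`tr A⁺ = ‖A‖₁ / 2`.
-/

open scoped ComplexOrder

/-- The trace norm ‖A‖₁ = tr √(A†A). -/
noncomputable def traceNorm {n : Type*} [Fintype n] [DecidableEq n]
    (A : Matrix n n ℂ) : ℝ :=
  (((Matrix.posSemidef_conjTranspose_mul_self A).1.eigenvectorUnitary : Matrix n n ℂ) *
      Matrix.diagonal (((↑) : ℝ → ℂ) ∘ Real.sqrt ∘ (Matrix.posSemidef_conjTranspose_mul_self A).1.eigenvalues) *
      (star (Matrix.posSemidef_conjTranspose_mul_self A).1.eigenvectorUnitary : Matrix n n ℂ)).trace.re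

open scoped MatrixOrder

namespace Matrix

variable {𝕜 n : Type*} [RCLike 𝕜] [Fintype n] [DecidableEq n]

lemma PosSemidef.trace_mul_nonneg {A B : Matrix n n 𝕜} (hA : A.PosSemidef) (hB : B.PosSemidef) :
    0 ≤ (A * B).trace := by
  have hsqrt : (CFC.sqrt B).IsHermitian :=
    (nonneg_iff_posSemidef.mp (CFC.sqrt_nonneg B)).isHermitian
  calc (0 : 𝕜) ≤ (CFC.sqrt B * A * (CFC.sqrt B)ᴴ).trace :=
        (hA.mul_mul_conjTranspose_same _).trace_nonneg
    _ = (A * B).trace := by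
        rw [hsqrt.eq, trace_mul_cycle, CFC.sqrt_mul_sqrt_self B hB.nonneg, trace_mul_comm]

lemma trace_mul_le_trace_posPart {A M : Matrix n n 𝕜} (hA : IsSelfAdjoint A) (hM₀ : 0 ≤ M)
    (hM₁ : M ≤ 1) : (M * A).trace ≤ (A⁺).trace := by
  have hpos : 0 ≤ ((1 - M) * A⁺).trace :=
    (le_iff.mp hM₁).trace_mul_nonneg (nonneg_iff_posSemidef.mp (CFC.posPart_nonneg A))
  have hneg : 0 ≤ (M * A⁻).trace :=
    (nonneg_iff_posSemidef.mp hM₀).trace_mul_nonneg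
      (nonneg_iff_posSemidef.mp (CFC.negPart_nonneg A))
  calc (M * A).trace = (A⁺).trace - (((1 - M) * A⁺).trace + (M * A⁻).trace) := by
        conv_lhs => rw [← CFC.posPart_sub_negPart A]
        simp only [mul_sub, sub_mul, one_mul, trace_sub]; abel
    _ ≤ (A⁺).trace := sub_le_self _ (add_nonneg hpos hneg)

lemma exists_mul_eq_posPart {A : Matrix n n 𝕜} (hA : IsSelfAdjoint A) :
    ∃ M : Matrix n n 𝕜, 0 ≤ M ∧ M ≤ 1 ∧ M * A = A⁺ := by
  let χ : ℝ → ℝ := fun x => if 0 < x then 1 else 0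
  have hχ : ContinuousOn χ (spectrum ℝ A) := A.finite_real_spectrum.continuousOn _
  refine ⟨cfc χ A, cfc_nonneg fun x _ => by positivity,
    cfc_le_one _ _ fun x _ => by dsimp only [χ]; split_ifs <;> norm_num, ?_⟩
  rw [CFC.posPart_def, cfcₙ_eq_cfc]
  nth_rewrite 2 [← cfc_id' ℝ A]
  rw [← cfc_mul _ _ _ hχ]
  refine cfc_congr fun x _ => ?_
  dsimp only [χ]
  split_ifs with hx
  · simp [hx.le]
  · simp [not_lt.mp hx]

lemma two_mul_trace_posPart {A : Matrix n n 𝕜} (hA : IsSelfAdjoint A) :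
    2 * (A⁺).trace = (CFC.abs A).trace + A.trace := by
  rw [← trace_add, CFC.abs_add_self A, trace_smul, two_smul, two_mul]

end Matrix

lemma traceNorm_eq_re_trace_abs {n : Type*} [Fintype n] [DecidableEq n] (A : Matrix n n ℂ) :
    traceNorm A = (CFC.abs A).trace.re := by
  have hB : (star A * A).IsHermitian := (Matrix.nonneg_iff_posSemidef.mp (star_mul_self_nonneg A)).1
  rw [CFC.abs, CFC.sqrt_eq_real_sqrt _ (star_mul_self_nonneg A), cfcₙ_eq_cfc, hB.cfc_eq,
    Matrix.IsHermitian.cfc, Unitary.conjStarAlgAut_apply]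
  rfl

/-- Helstrom bound: for density matrices ρ, σ, the maximum success
probability of distinguishing them (priors 1/2, one POVM measurement 0 ≤ M ≤ 1)
equals 1/2 + (1/4)‖ρ - σ‖₁, and it is attained. -/
theorem helstrom_bound
    {n : Type*} [Fintype n] [DecidableEq n]
    (ρ σ : Matrix n n ℂ) (hρ : ρ.PosSemidef) (hσ : σ.PosSemidef)
    (hρtr : ρ.trace = 1) (hσtr : σ.trace = 1) :
    IsGreatest
      {p : ℝ | ∃ M : Matrix n n ℂ, M.PosSemidef ∧ (1 - M).PosSemidef ∧
        p = (1/2) * ((M * ρ).trace).re + (1/2) * (((1 - M) * σ).trace).re}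
      (1/2 + (1/4) * traceNorm (ρ - σ)) := by
  have hA : IsSelfAdjoint (ρ - σ) := hρ.1.sub hσ.1
  have hsuccess (M : Matrix n n ℂ) :
      (1/2) * ((M * ρ).trace).re + (1/2) * (((1 - M) * σ).trace).re =
        1/2 + (1/2) * ((M * (ρ - σ)).trace).re := by
    rw [Matrix.sub_mul, Matrix.one_mul, Matrix.mul_sub, Matrix.trace_sub, Matrix.trace_sub, hσtr]
    simp only [Complex.sub_re, Complex.one_re]
    ring
  have htrace_posPart : ((ρ - σ)⁺).trace.re = (1/2) * traceNorm (ρ - σ) := by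
    have h := congrArg Complex.re (Matrix.two_mul_trace_posPart hA)
    rw [Matrix.trace_sub, hρtr, hσtr, sub_self, add_zero] at h
    rw [traceNorm_eq_re_trace_abs, ← h]
    simp
  constructor
  · obtain ⟨M, hM₀, hM₁, hMA⟩ := Matrix.exists_mul_eq_posPart hA
    refine ⟨M, Matrix.nonneg_iff_posSemidef.mp hM₀, hM₁, ?_⟩
    rw [hsuccess, hMA, htrace_posPart]
    ring
  · rintro p ⟨M, hM₀, hM₁, rfl⟩
    have h := Matrix.trace_mul_le_trace_posPart hA hM₀.nonneg hM₁
    rw [hsuccess]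
    linarith [(Complex.le_def.mp h).1]
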